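/- arXiv:1308.4670 — 2 statements merged into one kernel-verified Lean document; each statement's English description precedes it below -/
import Mathlib

section
/- Let P ⊆ ℝ², let G, W ⊆ P be finite sets such that conv(AGP(G,W)) is full-dimensional, and let g ∈ G. Then the inequality x_g ≥ 0 is a facet of conv(AGP(G,W)) if and only if every witness sees at least two guards other than g, i.e., |V(w) ∩ (G \ {g})| ≥ 2 for all w ∈ W. -/
open scoped Classical

/-- Points of the Euclidean plane. -/
abbrev Pt := EuclideanSpace ℝ (Fin 2)

/-- Visibility region of `p` in `P`. -/
def Vis (P : Set Pt) (p : Pt) : Set Pt := {q ∈ P | segment ℝ p q ⊆ P}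

/-- Feasible binary solutions of `AGP(G,W)`. -/
def Feasible (P : Set Pt) (G W : Finset Pt) : Set (↥G → ℝ) :=
  {x | (∀ g, x g = 0 ∨ x g = 1) ∧
    ∀ w ∈ W, ∃ g : ↥G, (g : Pt) ∈ Vis P w ∧ x g = 1}

/-- `a ⬝ x ≥ b` is a facet of `conv F ⊆ ℝ^G`: it is valid for all feasible solutions,
and the face where it holds with equality has affine dimension `|G| - 1`. -/
def IsFacet (G : Finset Pt) (F : Set (↥G → ℝ)) (a : ↥G → ℝ) (b : ℝ) : Prop :=
  (∀ x ∈ F, b ≤ ∑ g : ↥G, a g * x g) ∧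
  Module.finrank ℝ
      (affineSpan ℝ {x | x ∈ convexHull ℝ F ∧ ∑ g : ↥G, a g * x g = b}).direction
    = G.card - 1

/-!
The face `x_g = 0` lies in the coordinate hyperplane `x_g = 0`, so it is a facet iff its
direction is all of that hyperplane. If every witness sees two guards besides `g`, the binary
points `1 - e_g` and `1 - e_g - e_h` (`h ≠ g`) are feasible and their differences `e_h` span the
hyperplane. Conversely, if some witness sees no guard outside `{g, h}`, every feasible point has
`x_g = 1` or `x_h = 1`: for `h = g` this contradicts full-dimensionality, and for `h ≠ g` it
forces `x_h = 1` on the face, whose dimension is then at most `|G| - 2`.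
-/

section CoordinateSubspaces

variable {ι : Type*}

lemma vectorSpan_le_ker_proj {s : Set (ι → ℝ)} {i : ι} {c : ℝ} (h : ∀ x ∈ s, x i = c) :
    vectorSpan ℝ s ≤ LinearMap.ker (LinearMap.proj i : (ι → ℝ) →ₗ[ℝ] ℝ) := by
  rw [vectorSpan_def, Submodule.span_le]
  rintro _ ⟨x, hx, y, hy, rfl⟩
  simp [h x hx, h y hy]

lemma affineSpan_ne_top_of_forall_apply_eq {s : Set (ι → ℝ)} {i : ι} {c : ℝ}
    (h : ∀ x ∈ s, x i = c) : affineSpan ℝ s ≠ ⊤ := by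
  intro htop
  have hle := vectorSpan_le_ker_proj h
  rw [← direction_affineSpan, htop, AffineSubspace.direction_top, top_le_iff] at hle
  have hsingle : Pi.single i (1 : ℝ) ∈ LinearMap.ker (LinearMap.proj i : (ι → ℝ) →ₗ[ℝ] ℝ) :=
    hle ▸ Submodule.mem_top
  simp at hsingle

lemma indicator_compl_singleton_sub_indicator_compl_pair {i j : ι} (hij : i ≠ j) :
    ({i}ᶜ : Set ι).indicator (1 : ι → ℝ) - ({i, j}ᶜ : Set ι).indicator 1 = Pi.single j 1 := by
  funext k
  rcases eq_or_ne k j with rfl | hkj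
  · simp [hij.symm]
  · rcases eq_or_ne k i with rfl | hki <;> simp [*]

variable [Fintype ι]

lemma finrank_ker_proj (i : ι) :
    Module.finrank ℝ (LinearMap.ker (LinearMap.proj i : (ι → ℝ) →ₗ[ℝ] ℝ))
      = Fintype.card ι - 1 := by
  have hsurj : Function.Surjective (LinearMap.proj i : (ι → ℝ) →ₗ[ℝ] ℝ) :=
    fun c => ⟨Pi.single i c, by simp⟩
  have h := LinearMap.finrank_range_add_finrank_ker (LinearMap.proj i : (ι → ℝ) →ₗ[ℝ] ℝ)
  rw [LinearMap.range_eq_top.2 hsurj, finrank_top] at h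
  simp only [Module.finrank_self, Module.finrank_pi] at h
  omega

lemma finrank_ker_proj_prod_proj {i j : ι} (hij : i ≠ j) :
    Module.finrank ℝ (LinearMap.ker
      ((LinearMap.proj i : (ι → ℝ) →ₗ[ℝ] ℝ).prod (LinearMap.proj j)))
      + 2 = Fintype.card ι := by
  set f := (LinearMap.proj i : (ι → ℝ) →ₗ[ℝ] ℝ).prod (LinearMap.proj j)
  have hsurj : Function.Surjective f := by
    rintro ⟨a, b⟩
    exact ⟨Pi.single i a + Pi.single j b, by simp [f, hij, hij.symm]⟩
  have h := LinearMap.finrank_range_add_finrank_ker f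
  rw [LinearMap.range_eq_top.2 hsurj, finrank_top] at h
  simp only [Module.finrank_pi, Module.finrank_prod, Module.finrank_self] at h
  omega

lemma ker_proj_le_of_forall_single_mem {i : ι} {K : Submodule ℝ (ι → ℝ)}
    (h : ∀ j, j ≠ i → Pi.single j 1 ∈ K) :
    LinearMap.ker (LinearMap.proj i : (ι → ℝ) →ₗ[ℝ] ℝ) ≤ K := by
  intro v hv
  rw [← Finset.univ_sum_single v]
  refine Submodule.sum_mem _ fun j _ => ?_
  rcases eq_or_ne j i with rfl | hj
  · have hvj : v j = 0 := hv
    simp [hvj]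
  · have hmem := K.smul_mem (v j) (h j hj)
    rwa [← Pi.single_smul', smul_eq_mul, mul_one] at hmem

lemma finrank_direction_affineSpan_eq_of_forall_single_mem {s : Set (ι → ℝ)} {i : ι} {c : ℝ}
    (h : ∀ x ∈ s, x i = c) (hsingle : ∀ j, j ≠ i → Pi.single j 1 ∈ vectorSpan ℝ s) :
    Module.finrank ℝ (affineSpan ℝ s).direction = Fintype.card ι - 1 := by
  rw [direction_affineSpan, le_antisymm (vectorSpan_le_ker_proj h)
    (ker_proj_le_of_forall_single_mem hsingle), finrank_ker_proj]

lemma finrank_direction_affineSpan_add_two_le {s : Set (ι → ℝ)} {i j : ι} (hij : i ≠ j)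
    {a b : ℝ} (h : ∀ x ∈ s, x i = a ∧ x j = b) :
    Module.finrank ℝ (affineSpan ℝ s).direction + 2 ≤ Fintype.card ι := by
  have hle : vectorSpan ℝ s ≤ LinearMap.ker
      ((LinearMap.proj i : (ι → ℝ) →ₗ[ℝ] ℝ).prod (LinearMap.proj j)) := by
    rw [LinearMap.ker_prod]
    exact le_inf (vectorSpan_le_ker_proj fun x hx => (h x hx).1)
      (vectorSpan_le_ker_proj fun x hx => (h x hx).2)
  rw [direction_affineSpan, ← finrank_ker_proj_prod_proj hij]
  gcongr
  exact Submodule.finrank_mono hle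

end CoordinateSubspaces

lemma isFacet_coord_iff {G : Finset Pt} {F : Set (↥G → ℝ)} {g : ↥G} :
    IsFacet G F (fun g' => if g' = g then 1 else 0) 0 ↔
      (∀ x ∈ F, 0 ≤ x g) ∧
      Module.finrank ℝ (affineSpan ℝ {x | x ∈ convexHull ℝ F ∧ x g = 0}).direction
        = Fintype.card ↥G - 1 := by
  have hsum (x : ↥G → ℝ) : ∑ g' : ↥G, (if g' = g then (1 : ℝ) else 0) * x g' = x g := by
    simp
  simp only [IsFacet, hsum, Fintype.card_coe]
  rw [show {x | x ∈ convexHull ℝ F ∧ ∑ g' : ↥G, (if g' = g then (1 : ℝ) else 0) * x g' = 0}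
      = {x | x ∈ convexHull ℝ F ∧ x g = 0} by simp only [hsum]]

lemma two_le_ncard_vis_diff_iff {P : Set Pt} {G : Finset Pt} {w : Pt} {g : ↥G} :
    2 ≤ (Vis P w ∩ (↑G \ {(g : Pt)})).ncard ↔
      ∀ h : ↥G, ∃ g' : ↥G, g' ≠ g ∧ g' ≠ h ∧ (g' : Pt) ∈ Vis P w := by
  have hfin : (Vis P w ∩ (↑G \ {(g : Pt)})).Finite :=
    G.finite_toSet.subset fun _ hp => hp.2.1
  constructor
  · intro h2 h
    obtain ⟨p, ⟨hpv, hpG, hpg⟩, hph⟩ := Set.exists_ne_of_one_lt_ncard h2 (h : Pt)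
    exact ⟨⟨p, hpG⟩, fun he => hpg (congrArg Subtype.val he),
      fun he => hph (congrArg Subtype.val he), hpv⟩
  · intro hsees
    obtain ⟨g₁, hg₁, -, hv₁⟩ := hsees g
    obtain ⟨g₂, hg₂, h₂₁, hv₂⟩ := hsees g₁
    refine (Set.one_lt_ncard_iff hfin).2 ⟨g₁, g₂, ⟨hv₁, g₁.2, ?_⟩, ⟨hv₂, g₂.2, ?_⟩, ?_⟩
    · exact fun he => hg₁ (Subtype.ext he)
    · exact fun he => hg₂ (Subtype.ext he)
    · exact fun he => h₂₁ (Subtype.ext he).symm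

lemma indicator_compl_mem_feasible {P : Set Pt} {G W : Finset Pt} {T : Set ↥G}
    (h : ∀ w ∈ W, ∃ g' ∉ T, (g' : Pt) ∈ Vis P w) : Tᶜ.indicator 1 ∈ Feasible P G W := by
  refine ⟨fun g' => ?_, fun w hw => ?_⟩
  · by_cases hg' : g' ∈ Tᶜ <;> simp [hg']
  · obtain ⟨g', hg'T, hg'v⟩ := h w hw
    exact ⟨g', hg'v, by simp [hg'T]⟩

lemma apply_eq_one_or_of_mem_feasible {P : Set Pt} {G W : Finset Pt} {x : ↥G → ℝ}
    (hx : x ∈ Feasible P G W) {w : Pt} (hw : w ∈ W) {g h : ↥G}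
    (hblind : ∀ g' : ↥G, g' ≠ g → g' ≠ h → (g' : Pt) ∉ Vis P w) : x g = 1 ∨ x h = 1 := by
  obtain ⟨g', hv, hx1⟩ := hx.2 w hw
  by_cases hg : g' = g
  · exact .inl (hg ▸ hx1)
  by_cases hh : g' = h
  · exact .inr (hh ▸ hx1)
  exact absurd hv (hblind g' hg hh)

/-- On binary points, `x g = 1 ∨ x h = 1` is the convex condition `1 ≤ x g + x h`. -/
lemma convexHull_feasible_subset {P : Set Pt} {G W : Finset Pt} {g h : ↥G}
    (hcover : ∀ x ∈ Feasible P G W, x g = 1 ∨ x h = 1) :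
    convexHull ℝ (Feasible P G W) ⊆ {x | 1 ≤ x g + x h} ∩ {x | x h ≤ 1} := by
  refine convexHull_min (fun x hx => ?_) ((convex_halfSpace_ge ?_ 1).inter
    (convex_halfSpace_le ?_ 1))
  · rcases hx.1 g with hg | hg <;> rcases hx.1 h with hh | hh <;>
      rcases hcover x hx with h1 | h1 <;> simp_all
  · exact ((LinearMap.proj g : (↥G → ℝ) →ₗ[ℝ] ℝ) + LinearMap.proj h).isLinear
  · exact (LinearMap.proj h : (↥G → ℝ) →ₗ[ℝ] ℝ).isLinear

theorem nonneg_facet_iff_general (P : Set Pt) (G W : Finset Pt)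
    (hfull : affineSpan ℝ (convexHull ℝ (Feasible P G W)) = ⊤)
    (g : ↥G) :
    IsFacet G (Feasible P G W) (fun g' => if g' = g then 1 else 0) 0 ↔
      ∀ w ∈ W, 2 ≤ (Vis P w ∩ (↑G \ {(g : Pt)})).ncard := by
  simp only [isFacet_coord_iff, two_le_ncard_vis_diff_iff]
  constructor
  · rintro ⟨-, hdim⟩ w hw h
    by_contra! hblind
    have hcover x (hx : x ∈ Feasible P G W) := apply_eq_one_or_of_mem_feasible hx hw hblind
    rcases eq_or_ne h g with rfl | hhg
    · rw [affineSpan_convexHull] at hfull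
      exact affineSpan_ne_top_of_forall_apply_eq (fun x hx => (hcover x hx).elim id id) hfull
    · have hdim_le := finrank_direction_affineSpan_add_two_le hhg.symm
        (s := {x | x ∈ convexHull ℝ (Feasible P G W) ∧ x g = 0}) (a := 0) (b := 1)
        fun x ⟨hx, hxg⟩ => by
          obtain ⟨h1, h2⟩ := convexHull_feasible_subset hcover hx
          exact ⟨hxg, le_antisymm h2 (by simpa [hxg] using h1)⟩
      omega
  · intro hsees
    have hvertex (h : ↥G) : ({g, h}ᶜ : Set ↥G).indicator 1 ∈
        {x | x ∈ convexHull ℝ (Feasible P G W) ∧ x g = 0} := by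
      refine ⟨subset_convexHull ℝ _ (indicator_compl_mem_feasible fun w hw => ?_), by simp⟩
      obtain ⟨g', hg, hh, hv⟩ := hsees w hw h
      exact ⟨g', by simp [hg, hh], hv⟩
    refine ⟨fun x hx => by rcases hx.1 g with h0 | h0 <;> simp [h0], ?_⟩
    refine finrank_direction_affineSpan_eq_of_forall_single_mem (fun x hx => hx.2) fun h hhg => ?_
    rw [← indicator_compl_singleton_sub_indicator_compl_pair hhg.symm, ← Set.pair_eq_singleton]
    exact vsub_mem_vectorSpan ℝ (hvertex g) (hvertex h)

/-- If `conv(AGP(G,W))` is full-dimensional and `g ∈ G`, then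
`x_g ≥ 0` is a facet of `conv(AGP(G,W))` iff every witness sees at least two guards
other than `g`, i.e. `|V(w) ∩ (G \ {g})| ≥ 2` for all `w ∈ W`. -/
theorem nonneg_facet_iff (P : Set Pt) (G W : Finset Pt) (hG : ↑G ⊆ P) (hW : ↑W ⊆ P)
    (hfull : affineSpan ℝ (convexHull ℝ (Feasible P G W)) = ⊤)
    (g : ↥G) :
    IsFacet G (Feasible P G W) (fun g' => if g' = g then 1 else 0) 0 ↔
      ∀ w ∈ W, 2 ≤ (Vis P w ∩ (↑G \ {(g : Pt)})).ncard :=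
  nonneg_facet_iff_general P G W hfull g
end

section
/- Let P ⊆ ℝ², let G, W ⊆ P be finite sets such that conv(AGP(G,W)) is full-dimensional, and let w ∈ W. Then the witness-induced inequality ∑_{g ∈ V(w) ∩ G} x_g ≥ 1 is a facet of conv(AGP(G,W)) if and only if both of the following hold: (1) there is no witness w' ∈ W with V(w') ∩ G ⊊ V(w) ∩ G; and (2) for every guard g ∈ G \ V(w) there exists a guard g' ∈ V(w) ∩ G that sees every witness in the set {w' ∈ V(g) ∩ W : ḡ ∉ V(w') for all ḡ ∈ G \ (V(w) ∪ {g})}. -/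
/-!
Write `a` for the 0/1 coefficient vector of `V(w)` and `O = G \ V(w)`. The face
`{a ⬝ x = 1}` of the hull lies in a hyperplane, so it is a facet iff its direction is all of
`ker a`.

If (1) fails through `w'`, pick `g₀ ∈ V(w) \ V(w')`: every guard covering `w'` lies in
`V(w) \ {g₀}`, so `a ⬝ x ≥ 1 + x_{g₀}` on feasible points and `x_{g₀} = 0` on the face. If (2)
fails at `g ∈ O`, then `a ⬝ x + x_g ≥ 2` on feasible points: when `x_g = 0`, the guard `s ∈ V(w)`
covering `w` comes with a witness `w'` not seen by `s` that only `V(w)` can cover. So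
`x_g = 1` on the face. Either extra equation drops the dimension below `|G| - 1`.

Conversely, by (1) a witness seeing no guard of `O` sees all of `V(w) ∩ G`, so the 0/1 points
`𝟙({g'} ∪ O)` for `g' ∈ V(w)` and, with `s` from (2), `𝟙({s} ∪ O \ {g})` for `g ∈ O` are
feasible and lie on the face. Their differences `e_{g'} - e_{g₀}` and `e_g` span `ker a`.
-/

open scoped Classical

open Matrix Module

section LinearAlgebra

variable {K ι : Type*} [Field K] [Fintype ι] [DecidableEq ι]

theorem vectorSpan_le_ker_of_forall_eq {V W : Type*} [AddCommGroup V] [Module K V]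
    [AddCommGroup W] [Module K W] (f : V →ₗ[K] W) {S : Set V} {c : W}
    (hS : ∀ x ∈ S, f x = c) : vectorSpan K S ≤ LinearMap.ker f := by
  rw [vectorSpan_def, Submodule.span_le]
  rintro _ ⟨x, hx, y, hy, rfl⟩
  simp [hS x hx, hS y hy]

theorem finrank_ker_dotProductBilin {a : ι → K} (ha : a ≠ 0) :
    finrank K (LinearMap.ker (dotProductBilin K K a)) = Fintype.card ι - 1 := by
  have hne : dotProductBilin K K a ≠ 0 := by
    obtain ⟨i, hi⟩ := Function.ne_iff.1 ha
    exact fun h => hi (by simpa using LinearMap.congr_fun h (Pi.single i 1))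
  have := Module.Dual.finrank_ker_add_one_of_ne_zero hne
  rw [finrank_fintype_fun_eq_card] at this
  omega

theorem ker_dotProductBilin_le_span (a : ι → K) (i₀ : ι) :
    LinearMap.ker (dotProductBilin K K a) ≤
      Submodule.span K (Set.range fun i => Pi.single i 1 - a i • Pi.single i₀ 1) := by
  intro v hv
  rw [LinearMap.mem_ker, dotProductBilin_apply_apply] at hv
  refine (Submodule.mem_span_range_iff_exists_fun K).2 ⟨v, ?_⟩
  simp only [smul_sub, smul_smul, Finset.sum_sub_distrib, ← Finset.sum_smul]
  have hva : ∑ i, v i * a i = 0 := by rw [← hv, dotProduct_comm]; rfl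
  rw [hva, zero_smul, sub_zero, ← pi_eq_sum_univ']

theorem finrank_vectorSpan_lt_of_forall_apply_eq {a : ι → K} {i j : ι} (hij : i ≠ j)
    (hai : a i ≠ 0) {S : Set (ι → K)} {b r : K} (hS : ∀ x ∈ S, a ⬝ᵥ x = b ∧ x j = r) :
    finrank K (vectorSpan K S) < Fintype.card ι - 1 := by
  set f := dotProductBilin K K a
  have hle : vectorSpan K S ≤ LinearMap.ker f ⊓ LinearMap.ker (LinearMap.proj j) :=
    le_inf (vectorSpan_le_ker_of_forall_eq f fun x hx => (hS x hx).1)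
      (vectorSpan_le_ker_of_forall_eq (LinearMap.proj j) fun x hx => (hS x hx).2)
  have hlt : LinearMap.ker f ⊓ LinearMap.ker (LinearMap.proj j) < LinearMap.ker f := by
    refine inf_lt_left.2 fun h => ?_
    have hv : a i • Pi.single j 1 - a j • Pi.single i 1 ∈ LinearMap.ker f := by
      simp [f, mul_comm]
    simpa [hij, hai] using h hv
  rw [← finrank_ker_dotProductBilin (a := a) fun h => hai (by simp [h])]
  exact (Submodule.finrank_mono hle).trans_lt (Submodule.finrank_lt_finrank_of_lt hlt)

end LinearAlgebra

theorem Set.indicator_insert_of_notMem {α M : Type*} [DecidableEq α] [AddMonoid M] {a : α}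
    {T : Set α} (ha : a ∉ T) (f : α → M) :
    (insert a T).indicator f = Pi.single a (f a) + T.indicator f := by
  rw [Set.insert_eq, Set.indicator_union_of_disjoint (Set.disjoint_singleton_left.2 ha),
    Set.indicator_singleton]
  rfl

theorem le_of_mem_convexHull {E : Type*} [AddCommGroup E] [Module ℝ E] (f : E →ₗ[ℝ] ℝ)
    {F : Set E} {b : ℝ} (hF : ∀ x ∈ F, b ≤ f x) {x : E} (hx : x ∈ convexHull ℝ F) :
    b ≤ f x :=
  convexHull_min hF (convex_halfSpace_ge f.isLinear b) hx

theorem mem_vis_comm {P : Set Pt} {p q : Pt} : q ∈ Vis P p ↔ p ∈ Vis P q :=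
  have key {p q : Pt} (h : q ∈ Vis P p) : p ∈ Vis P q :=
    ⟨h.2 (left_mem_segment ℝ p q), segment_symm ℝ q p ▸ h.2⟩
  ⟨key, key⟩

section WitnessFace

variable (P : Set Pt) (G W : Finset Pt) (w : Pt)

noncomputable def witnessCoeff : ↥G → ℝ := fun g => if (g : Pt) ∈ Vis P w then 1 else 0

def outsideGuards : Set ↥G := {g | (g : Pt) ∉ Vis P w}

def witnessFace : Set (↥G → ℝ) :=
  {x | x ∈ convexHull ℝ (Feasible P G W) ∧ witnessCoeff P G w ⬝ᵥ x = 1}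

variable {P G W w}

theorem nonneg_of_mem_feasible {x : ↥G → ℝ} (hx : x ∈ Feasible P G W) : 0 ≤ x :=
  fun g => by rcases hx.1 g with h | h <;> simp [h]

theorem convexHull_feasible_subset_Icc : convexHull ℝ (Feasible P G W) ⊆ Set.Icc 0 1 := by
  refine convexHull_min (fun x hx => ⟨nonneg_of_mem_feasible hx, fun g => ?_⟩) (convex_Icc 0 1)
  rcases hx.1 g with h | h <;> simp [h]

theorem card_le_witnessCoeff_dotProduct {x : ↥G → ℝ} (hx : 0 ≤ x) {T : Finset ↥G}
    (hT : ∀ g ∈ T, (g : Pt) ∈ Vis P w ∧ x g = 1) : (T.card : ℝ) ≤ witnessCoeff P G w ⬝ᵥ x := by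
  calc (T.card : ℝ) = ∑ g ∈ T, witnessCoeff P G w g * x g := by
        rw [Finset.card_eq_sum_ones, Nat.cast_sum]
        exact Finset.sum_congr rfl fun g hg => by simp [witnessCoeff, hT g hg]
    _ ≤ witnessCoeff P G w ⬝ᵥ x :=
        Finset.sum_le_sum_of_subset_of_nonneg (Finset.subset_univ T) fun g _ _ =>
          mul_nonneg (by unfold witnessCoeff; split_ifs <;> norm_num) (hx g)

theorem one_le_witnessCoeff_dotProduct {x : ↥G → ℝ} (hx : 0 ≤ x) {g : ↥G}
    (hg : (g : Pt) ∈ Vis P w) (hxg : x g = 1) : 1 ≤ witnessCoeff P G w ⬝ᵥ x := by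
  simpa using card_le_witnessCoeff_dotProduct (P := P) (w := w) hx (T := {g})
    (by simpa using ⟨hg, hxg⟩)

theorem two_le_witnessCoeff_dotProduct {x : ↥G → ℝ} (hx : 0 ≤ x) {g g' : ↥G} (hne : g ≠ g')
    (hg : (g : Pt) ∈ Vis P w) (hg' : (g' : Pt) ∈ Vis P w) (hxg : x g = 1) (hxg' : x g' = 1) :
    2 ≤ witnessCoeff P G w ⬝ᵥ x := by
  have := card_le_witnessCoeff_dotProduct (P := P) (w := w) hx (T := {g, g'})
    (by simp [hg, hg', hxg, hxg'])
  rwa [Finset.card_pair hne, Nat.cast_two] at this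

theorem one_le_witnessCoeff_dotProduct_of_mem_feasible (hw : w ∈ W) {x : ↥G → ℝ}
    (hx : x ∈ Feasible P G W) :
    1 ≤ witnessCoeff P G w ⬝ᵥ x := by
  obtain ⟨g, hgw, hg⟩ := hx.2 w hw
  exact one_le_witnessCoeff_dotProduct (nonneg_of_mem_feasible hx) hgw hg

theorem indicator_mem_feasible {T : Set ↥G} (hT : ∀ w' ∈ W, ∃ g ∈ T, (g : Pt) ∈ Vis P w') :
    T.indicator 1 ∈ Feasible P G W := by
  refine ⟨fun g => by by_cases hg : g ∈ T <;> simp [hg], fun w' hw' => ?_⟩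
  obtain ⟨g, hgT, hgw'⟩ := hT w' hw'
  exact ⟨g, hgw', by simp [hgT]⟩

theorem witnessCoeff_dotProduct_indicator_eq_zero {T : Set ↥G}
    (hT : ∀ g ∈ T, (g : Pt) ∉ Vis P w) : witnessCoeff P G w ⬝ᵥ T.indicator 1 = 0 :=
  Finset.sum_eq_zero fun g _ => by
    by_cases hg : g ∈ T <;> simp [witnessCoeff, hg, hT]

theorem mem_vis_of_vis_inter_subset (h1 : ¬∃ w' ∈ W, Vis P w' ∩ ↑G ⊂ Vis P w ∩ ↑G)
    {w' : Pt} (hw' : w' ∈ W) (hout : ∀ g : ↥G, (g : Pt) ∈ Vis P w' → (g : Pt) ∈ Vis P w)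
    {g : ↥G} (hg : (g : Pt) ∈ Vis P w) : (g : Pt) ∈ Vis P w' := by
  have hsub : Vis P w' ∩ ↑G ⊆ Vis P w ∩ ↑G := fun p ⟨hp, hpG⟩ => ⟨hout ⟨p, hpG⟩ hp, hpG⟩
  have heq := hsub.eq_of_not_ssubset fun hss => h1 ⟨w', hw', hss⟩
  exact (heq ▸ ⟨hg, g.2⟩ : (g : Pt) ∈ Vis P w' ∩ ↑G).1


theorem indicator_insert_outsideGuards_mem_witnessFace
    (h1 : ¬∃ w' ∈ W, Vis P w' ∩ ↑G ⊂ Vis P w ∩ ↑G) {g' : ↥G} (hg' : (g' : Pt) ∈ Vis P w) :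
    (insert g' (outsideGuards P G w)).indicator 1 ∈ witnessFace P G W w := by
  refine ⟨subset_convexHull ℝ _ (indicator_mem_feasible fun w' hw' => ?_), ?_⟩
  · by_cases h : ∃ g : ↥G, (g : Pt) ∈ Vis P w' ∧ (g : Pt) ∉ Vis P w
    · obtain ⟨g, hgw', hgw⟩ := h
      exact ⟨g, Set.mem_insert_of_mem _ hgw, hgw'⟩
    · push Not at h
      exact ⟨g', Set.mem_insert _ _, mem_vis_of_vis_inter_subset h1 hw' h hg'⟩
  · rw [Set.indicator_insert_of_notMem (not_not_intro hg'), dotProduct_add,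
      witnessCoeff_dotProduct_indicator_eq_zero (T := outsideGuards P G w) fun _ h => h]
    simp [witnessCoeff, hg']

theorem indicator_insert_outsideGuards_diff_mem_witnessFace
    (h1 : ¬∃ w' ∈ W, Vis P w' ∩ ↑G ⊂ Vis P w ∩ ↑G) {g s : ↥G} (hs : (s : Pt) ∈ Vis P w)
    (hsees : ∀ w' ∈ W, w' ∈ Vis P g →
      (∀ gbar ∈ G, gbar ∉ Vis P w → gbar ≠ g → gbar ∉ Vis P w') → w' ∈ Vis P s) :
    (insert s (outsideGuards P G w \ {g})).indicator 1 ∈ witnessFace P G W w := by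
  refine ⟨subset_convexHull ℝ _ (indicator_mem_feasible fun w' hw' => ?_), ?_⟩
  · by_cases h : ∃ g' : ↥G, (g' : Pt) ∈ Vis P w' ∧ (g' : Pt) ∉ Vis P w ∧ g' ≠ g
    · obtain ⟨g', hg'w', hg'w, hg'g⟩ := h
      exact ⟨g', Set.mem_insert_of_mem _ ⟨hg'w, hg'g⟩, hg'w'⟩
    push Not at h
    refine ⟨s, Set.mem_insert _ _, ?_⟩
    by_cases hgw' : (g : Pt) ∈ Vis P w'
    · refine mem_vis_comm.1 (hsees w' hw' (mem_vis_comm.1 hgw') fun gbar hgbar hout hne hvis => ?_)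
      exact hne (congrArg Subtype.val (h ⟨gbar, hgbar⟩ hvis hout))
    · refine mem_vis_of_vis_inter_subset h1 hw' (fun g' hg'w' => ?_) hs
      by_contra hg'w
      exact hgw' (h g' hg'w' hg'w ▸ hg'w')
  · rw [Set.indicator_insert_of_notMem (fun h => h.1 hs), dotProduct_add,
      witnessCoeff_dotProduct_indicator_eq_zero (T := outsideGuards P G w \ {g}) fun _ h => h.1]
    simp [witnessCoeff, hs]

theorem finrank_vectorSpan_witnessFace_of_conditions
    (h1 : ¬∃ w' ∈ W, Vis P w' ∩ ↑G ⊂ Vis P w ∩ ↑G)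
    (h2 : ∀ g ∈ G, g ∉ Vis P w → ∃ g' ∈ G, g' ∈ Vis P w ∧ ∀ w' ∈ W, w' ∈ Vis P g →
      (∀ gbar ∈ G, gbar ∉ Vis P w → gbar ≠ g → gbar ∉ Vis P w') → w' ∈ Vis P g')
    {g₀ : ↥G} (hg₀ : (g₀ : Pt) ∈ Vis P w) :
    finrank ℝ (vectorSpan ℝ (witnessFace P G W w)) = G.card - 1 := by
  set u := outsideGuards P G w
  have hu {g : ↥G} (hg : (g : Pt) ∈ Vis P w) : g ∉ u := not_not_intro hg
  have hker : LinearMap.ker (dotProductBilin ℝ ℝ (witnessCoeff P G w)) ≤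
      vectorSpan ℝ (witnessFace P G W w) := by
    refine (ker_dotProductBilin_le_span _ g₀).trans (Submodule.span_le.2 ?_)
    rintro _ ⟨g, rfl⟩
    dsimp only [SetLike.mem_coe]
    by_cases hg : (g : Pt) ∈ Vis P w
    · have hdiff : (insert g u).indicator (1 : ↥G → ℝ) -ᵥ (insert g₀ u).indicator 1 =
          Pi.single g 1 - witnessCoeff P G w g • Pi.single g₀ 1 := by
        rw [vsub_eq_sub, Set.indicator_insert_of_notMem (hu hg),
          Set.indicator_insert_of_notMem (hu hg₀)]
        simp [witnessCoeff, hg]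
      exact hdiff ▸ vsub_mem_vectorSpan ℝ (indicator_insert_outsideGuards_mem_witnessFace h1 hg)
        (indicator_insert_outsideGuards_mem_witnessFace h1 hg₀)
    · obtain ⟨s, hsG, hs, hsees⟩ := h2 g g.2 hg
      have hdiff : (insert ⟨s, hsG⟩ u).indicator (1 : ↥G → ℝ) -ᵥ
          (insert ⟨s, hsG⟩ (u \ {g})).indicator 1 =
          Pi.single g 1 - witnessCoeff P G w g • Pi.single g₀ 1 := by
        rw [vsub_eq_sub, Set.indicator_insert_of_notMem (hu hs),
          Set.indicator_insert_of_notMem (fun h => hu hs h.1)]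
        nth_rw 1 [← Set.insert_sdiff_self_of_mem (show g ∈ u from hg)]
        rw [Set.indicator_insert_of_notMem (fun h => h.2 rfl)]
        simp [witnessCoeff, hg]
      exact hdiff ▸ vsub_mem_vectorSpan ℝ (indicator_insert_outsideGuards_mem_witnessFace h1 hs)
        (indicator_insert_outsideGuards_diff_mem_witnessFace h1 hs hsees)
  rw [le_antisymm (vectorSpan_le_ker_of_forall_eq _ fun x hx => hx.2) hker,
    finrank_ker_dotProductBilin, Fintype.card_coe]
  exact Function.ne_iff.2 ⟨g₀, by simp [witnessCoeff, hg₀]⟩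

theorem finrank_vectorSpan_witnessFace_lt_of_ssubset {x₀ : ↥G → ℝ}
    (hx₀ : x₀ ∈ Feasible P G W) {w' : Pt} (hw' : w' ∈ W)
    (hss : Vis P w' ∩ ↑G ⊂ Vis P w ∩ ↑G) :
    finrank ℝ (vectorSpan ℝ (witnessFace P G W w)) < G.card - 1 := by
  obtain ⟨p, ⟨hpw, hpG⟩, hpw'⟩ := Set.exists_of_ssubset hss
  set g₀ : ↥G := ⟨p, hpG⟩
  have hsees {g : ↥G} (hg : (g : Pt) ∈ Vis P w') : (g : Pt) ∈ Vis P w ∧ g ≠ g₀ :=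
    ⟨(hss.subset ⟨hg, g.2⟩).1, by rintro rfl; exact hpw' ⟨hg, hpG⟩⟩
  have hvalid : ∀ x ∈ Feasible P G W,
      1 ≤ (dotProductBilin ℝ ℝ (witnessCoeff P G w) - LinearMap.proj g₀ : (↥G → ℝ) →ₗ[ℝ] ℝ) x := by
    intro x hx
    obtain ⟨g, hg, hxg⟩ := hx.2 w' hw'
    have hx0 := nonneg_of_mem_feasible hx
    simp only [LinearMap.sub_apply, dotProductBilin_apply_apply, LinearMap.proj_apply]
    rcases hx.1 g₀ with h0 | h0
    · linarith [one_le_witnessCoeff_dotProduct hx0 (hsees hg).1 hxg]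
    · linarith [two_le_witnessCoeff_dotProduct hx0 (hsees hg).2 (hsees hg).1 hpw hxg h0]
  obtain ⟨g₁, hg₁, -⟩ := hx₀.2 w' hw'
  rw [← Fintype.card_coe]
  refine finrank_vectorSpan_lt_of_forall_apply_eq (hsees hg₁).2
    (by simp [witnessCoeff, (hsees hg₁).1])
    (b := 1) (r := 0) fun x hx => ⟨hx.2, ?_⟩
  have hle := le_of_mem_convexHull _ hvalid hx.1
  simp only [LinearMap.sub_apply, dotProductBilin_apply_apply, LinearMap.proj_apply, hx.2] at hle
  have : 0 ≤ x g₀ := (convexHull_feasible_subset_Icc hx.1).1 g₀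
  linarith

theorem finrank_vectorSpan_witnessFace_lt_of_forall_exists (hw : w ∈ W) {g₀ g : ↥G}
    (hg₀ : (g₀ : Pt) ∈ Vis P w) (hg : (g : Pt) ∉ Vis P w)
    (h : ∀ s ∈ G, s ∈ Vis P w → ∃ w' ∈ W, w' ∈ Vis P g ∧
      (∀ gbar ∈ G, gbar ∉ Vis P w → gbar ≠ g → gbar ∉ Vis P w') ∧ w' ∉ Vis P s) :
    finrank ℝ (vectorSpan ℝ (witnessFace P G W w)) < G.card - 1 := by
  have hvalid : ∀ x ∈ Feasible P G W,
      2 ≤ (dotProductBilin ℝ ℝ (witnessCoeff P G w) + LinearMap.proj g : (↥G → ℝ) →ₗ[ℝ] ℝ) x := by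
    intro x hx
    have hx0 := nonneg_of_mem_feasible hx
    simp only [LinearMap.add_apply, dotProductBilin_apply_apply, LinearMap.proj_apply]
    rcases hx.1 g with h0 | h0
    · obtain ⟨s, hs, hxs⟩ := hx.2 w hw
      obtain ⟨w', hw', -, hout, hw's⟩ := h s s.2 hs
      obtain ⟨g', hg', hxg'⟩ := hx.2 w' hw'
      have hg'w : (g' : Pt) ∈ Vis P w := by
        by_contra hg'w
        refine hout g' g'.2 hg'w (fun he => ?_) hg'
        rw [Subtype.ext he, h0] at hxg'
        exact zero_ne_one hxg'
      have hne : g' ≠ s := by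
        rintro rfl
        exact hw's (mem_vis_comm.1 hg')
      linarith [two_le_witnessCoeff_dotProduct hx0 hne hg'w hs hxg' hxs]
    · linarith [one_le_witnessCoeff_dotProduct_of_mem_feasible hw hx]
  rw [← Fintype.card_coe]
  refine finrank_vectorSpan_lt_of_forall_apply_eq (i := g₀) (j := g) (fun he => hg (he ▸ hg₀))
    (by simp [witnessCoeff, hg₀]) (b := 1) (r := 1) fun x hx => ⟨hx.2, ?_⟩
  have hle := le_of_mem_convexHull _ hvalid hx.1
  simp only [LinearMap.add_apply, dotProductBilin_apply_apply, LinearMap.proj_apply, hx.2] at hle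
  have : x g ≤ 1 := (convexHull_feasible_subset_Icc hx.1).2 g
  linarith

theorem isFacet_witnessCoeff_iff (hw : w ∈ W) :
    IsFacet G (Feasible P G W) (witnessCoeff P G w) 1 ↔
      finrank ℝ (vectorSpan ℝ (witnessFace P G W w)) = G.card - 1 := by
  rw [IsFacet, direction_affineSpan]
  exact and_iff_right fun x hx => one_le_witnessCoeff_dotProduct_of_mem_feasible hw hx

end WitnessFace

theorem witness_facet_iff_general (P : Set Pt) (G W : Finset Pt)
    (hfull : affineSpan ℝ (convexHull ℝ (Feasible P G W)) = ⊤)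
    (w : Pt) (hw : w ∈ W) :
    IsFacet G (Feasible P G W) (fun g => if (g : Pt) ∈ Vis P w then 1 else 0) 1 ↔
      ((¬ ∃ w' ∈ W, Vis P w' ∩ ↑G ⊂ Vis P w ∩ ↑G) ∧
       (∀ g ∈ G, g ∉ Vis P w →
          ∃ g' ∈ G, g' ∈ Vis P w ∧
            ∀ w' ∈ W, w' ∈ Vis P g →
              (∀ gbar ∈ G, gbar ∉ Vis P w → gbar ≠ g → gbar ∉ Vis P w') →
              w' ∈ Vis P g')) := by
  obtain ⟨x₀, hx₀⟩ : (Feasible P G W).Nonempty := by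
    rw [← convexHull_nonempty_iff (𝕜 := ℝ), ← affineSpan_nonempty ℝ, hfull]
    exact ⟨0, trivial⟩
  obtain ⟨g₀, hg₀, -⟩ := hx₀.2 w hw
  refine (isFacet_witnessCoeff_iff hw).trans
    ⟨fun hdim => ⟨?_, ?_⟩, fun ⟨h1, h2⟩ => finrank_vectorSpan_witnessFace_of_conditions h1 h2 hg₀⟩
  · rintro ⟨w', hw', hss⟩
    exact (finrank_vectorSpan_witnessFace_lt_of_ssubset hx₀ hw' hss).ne hdim
  · intro g hgG hg
    by_contra! h
    exact (finrank_vectorSpan_witnessFace_lt_of_forall_exists (g := ⟨g, hgG⟩) hw hg₀ hg h).ne hdim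

/-- If `conv(AGP(G,W))` is full-dimensional and `w ∈ W`, then the
witness-induced inequality `∑_{g ∈ V(w) ∩ G} x_g ≥ 1` is a facet of `conv(AGP(G,W))`
iff (1) no witness `w' ∈ W` satisfies `V(w') ∩ G ⊊ V(w) ∩ G`, and (2) for every guard
`g ∈ G \ V(w)` there is a guard `g' ∈ V(w) ∩ G` seeing every witness in
`{w' ∈ V(g) ∩ W : ḡ ∉ V(w') for all ḡ ∈ G \ (V(w) ∪ {g})}`. -/
theorem witness_facet_iff (P : Set Pt) (G W : Finset Pt) (hG : ↑G ⊆ P) (hW : ↑W ⊆ P)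
    (hfull : affineSpan ℝ (convexHull ℝ (Feasible P G W)) = ⊤)
    (w : Pt) (hw : w ∈ W) :
    IsFacet G (Feasible P G W) (fun g => if (g : Pt) ∈ Vis P w then 1 else 0) 1 ↔
      ((¬ ∃ w' ∈ W, Vis P w' ∩ ↑G ⊂ Vis P w ∩ ↑G) ∧
       (∀ g ∈ G, g ∉ Vis P w →
          ∃ g' ∈ G, g' ∈ Vis P w ∧
            ∀ w' ∈ W, w' ∈ Vis P g →
              (∀ gbar ∈ G, gbar ∉ Vis P w → gbar ≠ g → gbar ∉ Vis P w') →
              w' ∈ Vis P g')) :=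
  witness_facet_iff_general P G W hfull w hw
end
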